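/- arXiv:2306.15818 — 3 statements merged into one kernel-verified Lean document; each statement's English description precedes it below -/
import Mathlib

section
/- Let G be a finite connected non-complete simple graph. If μt(G) = n(G) − diam(G) + 1, then γc(G) = diam(G) − 1. -/
/-!
If `X` is a total mutual-visibility set whose complement is nonempty, then `Xᶜ` is a connected
dominating set: two vertices of `Xᶜ` are joined by a shortest path all of whose vertices lie in
`Xᶜ`, and a vertex of `X` is adjacent to the second vertex of a shortest path towards any of its
non-neighbours. Hence `γc(G) ≤ n(G) - μt(G)`, which under the hypothesis is `diam(G) - 1`.
Conversely, joining two vertices through neighbours in a connected dominating set `D` and a path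
inside `D` shows `diam(G) ≤ |D| + 1`.
-/

open SimpleGraph

/-- `X` is a total mutual-visibility set of `G`: every two vertices of `G` are `X`-visible,
i.e. joined by a shortest path whose internal vertices avoid `X`. -/
def IsTMVSet {V : Type*} (G : SimpleGraph V) (X : Set V) : Prop :=
  ∀ x y : V, ∃ p : G.Walk x y, p.length = G.dist x y ∧
    ∀ w ∈ p.support, w ≠ x → w ≠ y → w ∉ X

/-- The total mutual-visibility number of `G`. -/
noncomputable def muT {V : Type*} (G : SimpleGraph V) : ℕ :=
  sSup {n : ℕ | ∃ X : Set V, IsTMVSet G X ∧ X.ncard = n}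

/-- `D` is a dominating set of `G`. -/
def IsDomSet {V : Type*} (G : SimpleGraph V) (D : Set V) : Prop :=
  ∀ v : V, v ∉ D → ∃ u ∈ D, G.Adj u v

/-- The domination number of `G`. -/
noncomputable def gammaDom {V : Type*} (G : SimpleGraph V) : ℕ :=
  sInf {n : ℕ | ∃ D : Set V, IsDomSet G D ∧ D.ncard = n}

/-- `D` is a connected dominating set of `G`. -/
def IsConnDomSet {V : Type*} (G : SimpleGraph V) (D : Set V) : Prop :=
  IsDomSet G D ∧ (G.induce D).Connected

/-- The connected domination number of `G`. -/
noncomputable def gammaConnDom {V : Type*} (G : SimpleGraph V) : ℕ :=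
  sInf {n : ℕ | ∃ D : Set V, IsConnDomSet G D ∧ D.ncard = n}

/-- The closed neighborhood of a vertex. -/
def closedNbhd {V : Type*} (G : SimpleGraph V) (v : V) : Set V :=
  insert v (G.neighborSet v)

/-- The set of simplicial vertices of `G`. -/
def simpSet {V : Type*} (G : SimpleGraph V) : Set V :=
  {v | G.IsClique (G.neighborSet v)}

/-- The set `P(G)` of vertices that appear as the unique common closed neighbor of
two vertices. -/
def pSet {V : Type*} (G : SimpleGraph V) : Set V :=
  {v | ∃ u w : V, closedNbhd G u ∩ closedNbhd G w = {v}}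

/-- The set `C(G)` of vertices belonging to every maximum total mutual-visibility set. -/
def compulsorySet {V : Type*} (G : SimpleGraph V) : Set V :=
  {v | ∀ X : Set V, IsTMVSet G X → X.ncard = muT G → v ∈ X}

/-- The set `F(G)` of vertices belonging to no maximum total mutual-visibility set. -/
def forbiddenSet {V : Type*} (G : SimpleGraph V) : Set V :=
  {v | ∀ X : Set V, IsTMVSet G X → X.ncard = muT G → v ∉ X}

/-- The independent total mutual-visibility number of `G`. -/
noncomputable def muIT {V : Type*} (G : SimpleGraph V) : ℕ :=
  sSup {n : ℕ | ∃ X : Set V, IsTMVSet G X ∧ (∀ u ∈ X, ∀ v ∈ X, ¬ G.Adj u v) ∧ X.ncard = n}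

/-- The join `G + H` of two graphs. -/
def joinGraph {V W : Type*} (G : SimpleGraph V) (H : SimpleGraph W) :
    SimpleGraph (V ⊕ W) :=
  SimpleGraph.fromRel (fun x y =>
    (∃ a b, x = Sum.inl a ∧ y = Sum.inl b ∧ G.Adj a b) ∨
    (∃ a b, x = Sum.inr a ∧ y = Sum.inr b ∧ H.Adj a b) ∨
    (∃ a b, x = Sum.inl a ∧ y = Sum.inr b))

/-- The corona product `G ⊙ H`: a copy of `G` together with a copy `Hᵢ` of `H` for each
vertex `uᵢ` of `G`, where `uᵢ` is joined to all vertices of `Hᵢ`. -/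
def coronaProd {V W : Type*} (G : SimpleGraph V) (H : SimpleGraph W) :
    SimpleGraph (V ⊕ V × W) :=
  SimpleGraph.fromRel (fun x y =>
    (∃ a b, x = Sum.inl a ∧ y = Sum.inl b ∧ G.Adj a b) ∨
    (∃ i w w', x = Sum.inr (i, w) ∧ y = Sum.inr (i, w') ∧ H.Adj w w') ∨
    (∃ i w, x = Sum.inl i ∧ y = Sum.inr (i, w)))

/-- The lexicographic product `G ∘ H`. -/
def lexProd {V W : Type*} (G : SimpleGraph V) (H : SimpleGraph W) :
    SimpleGraph (V × W) where
  Adj x y := G.Adj x.1 y.1 ∨ (x.1 = y.1 ∧ H.Adj x.2 y.2)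
  symm := ⟨fun x y h => by
    rcases h with h | ⟨h1, h2⟩
    · exact Or.inl h.symm
    · exact Or.inr ⟨h1.symm, h2.symm⟩⟩
  loopless := ⟨fun x h => by
    rcases h with h | ⟨_, h⟩
    · exact G.loopless.irrefl _ h
    · exact H.loopless.irrefl _ h⟩

/-- `B` induces a 2-connected subgraph of `G`. -/
def IsTwoConnSet {V : Type*} (G : SimpleGraph V) (B : Set V) : Prop :=
  3 ≤ B.ncard ∧ (G.induce B).Connected ∧ ∀ v ∈ B, (G.induce (B \ {v})).Connected

namespace SimpleGraph

variable {V : Type*} {G : SimpleGraph V}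

lemma Connected.two_le_diam [Finite V] (hG : G.Connected) (hnc : G ≠ ⊤) : 2 ≤ G.diam := by
  have : Nontrivial V := by
    by_contra! hV
    exact hnc (by ext a b; simp [Subsingleton.elim a b])
  have h0 : G.diam ≠ 0 := by
    simpa [diam_eq_zero, not_subsingleton V] using (connected_iff_ediam_ne_top.mp hG)
  have h1 : G.diam ≠ 1 := by rwa [Ne, diam_eq_one]
  omega

lemma Connected.diam_lt_card [Fintype V] (hG : G.Connected) : G.diam < Fintype.card V := by
  have := hG.nonempty
  obtain ⟨u, v, huv⟩ := G.exists_dist_eq_diam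
  obtain ⟨p, hp, hlen⟩ := hG.exists_path_of_dist u v
  exact huv ▸ hlen ▸ hp.length_lt

end SimpleGraph

section TotalMutualVisibility

variable {V : Type*} {G : SimpleGraph V} {X : Set V}

lemma isTMVSet_empty (hG : G.Preconnected) : IsTMVSet G ∅ := by
  intro x y
  obtain ⟨p, hp⟩ := (hG x y).exists_walk_length_eq_dist
  exact ⟨p, hp, fun _ _ _ _ => Set.notMem_empty _⟩

lemma exists_isTMVSet_ncard_eq_muT [Finite V] (hG : G.Preconnected) :
    ∃ X, IsTMVSet G X ∧ X.ncard = muT G := by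
  change muT G ∈ {n | ∃ X : Set V, IsTMVSet G X ∧ X.ncard = n}
  refine Nat.sSup_mem ⟨0, ∅, isTMVSet_empty hG, Set.ncard_empty V⟩ ⟨Nat.card V, ?_⟩
  rintro _ ⟨X, -, rfl⟩
  exact Set.ncard_le_card X

lemma IsTMVSet.isDomSet_compl (hX : IsTMVSet G X) (hne : Xᶜ.Nonempty) : IsDomSet G Xᶜ := by
  intro v hv
  rw [Set.notMem_compl_iff] at hv
  by_cases huniv : ∀ z, z ≠ v → G.Adj v z
  · obtain ⟨u, hu⟩ := hne
    exact ⟨u, hu, (huniv u (ne_of_mem_of_not_mem hv hu).symm).symm⟩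
  push Not at huniv
  obtain ⟨z, hzv, hvz⟩ := huniv
  obtain ⟨p, -, hint⟩ := hX v z
  have hp : ¬p.Nil := fun h => hzv (h.eq).symm
  have hadj : G.Adj v p.snd := p.adj_snd hp
  have hsnd : p.snd ∈ p.support := List.mem_of_mem_tail (p.snd_mem_tail_support hp)
  exact ⟨p.snd, hint _ hsnd hadj.ne' (fun h => hvz (h ▸ hadj)), hadj.symm⟩

lemma IsTMVSet.connected_induce_compl (hX : IsTMVSet G X) (hne : Xᶜ.Nonempty) :
    (G.induce Xᶜ).Connected := by
  have : Nonempty (Xᶜ : Set V) := hne.to_subtype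
  refine .mk fun ⟨a, ha⟩ ⟨b, hb⟩ => ?_
  obtain ⟨p, -, hint⟩ := hX a b
  have hsupp : ∀ w ∈ p.support, w ∈ (Xᶜ : Set V) := fun w hw => by
    by_cases hwa : w = a
    · exact hwa ▸ ha
    by_cases hwb : w = b
    · exact hwb ▸ hb
    exact hint w hw hwa hwb
  exact (p.induce Xᶜ hsupp).reachable

end TotalMutualVisibility

section ConnectedDomination

variable {V : Type*} {G : SimpleGraph V} {D : Set V}

lemma IsDomSet.exists_mem_edist_le_one (hD : IsDomSet G D) (u : V) :
    ∃ u' ∈ D, G.edist u u' ≤ 1 := by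
  by_cases hu : u ∈ D
  · exact ⟨u, hu, by simp⟩
  obtain ⟨u', hu', hadj⟩ := hD u hu
  exact ⟨u', hu', (edist_eq_one_iff_adj.mpr hadj.symm).le⟩

lemma isConnDomSet_univ (hG : G.Connected) : IsConnDomSet G Set.univ :=
  ⟨fun v hv => absurd (Set.mem_univ v) hv, (induceUnivIso G).connected_iff.mpr hG⟩

lemma IsConnDomSet.edist_le_ncard_add_one [Finite V] (hD : IsConnDomSet G D) (u v : V) :
    G.edist u v ≤ D.ncard + 1 := by
  have : Fintype D := Fintype.ofFinite D
  obtain ⟨u', hu', huu'⟩ := hD.1.exists_mem_edist_le_one u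
  obtain ⟨v', hv', hvv'⟩ := hD.1.exists_mem_edist_le_one v
  obtain ⟨p, hp⟩ := (hD.2.preconnected ⟨u', hu'⟩ ⟨v', hv'⟩).exists_isPath
  have hlen : p.length < D.ncard := by
    rw [← Nat.card_coe_set_eq, Nat.card_eq_fintype_card]
    exact hp.length_lt
  have hu'v' : G.edist u' v' ≤ p.length := by
    have := edist_le (p.map (Embedding.induce D).toHom)
    rwa [Walk.length_map] at this
  calc G.edist u v ≤ G.edist u u' + G.edist u' v' + G.edist v' v :=
        G.edist_triangle.trans (add_le_add_left G.edist_triangle _)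
    _ ≤ 1 + p.length + 1 := by rw [edist_comm (u := v')]; gcongr
    _ ≤ D.ncard + 1 := by norm_cast; omega

lemma IsConnDomSet.diam_le_ncard_add_one [Finite V] (hD : IsConnDomSet G D) :
    G.diam ≤ D.ncard + 1 :=
  ENat.toNat_le_of_le_natCast <| ediam_le_of_edist_le <| by
    exact_mod_cast hD.edist_le_ncard_add_one

lemma diam_le_gammaConnDom_add_one [Finite V] (hG : G.Connected) :
    G.diam ≤ gammaConnDom G + 1 := by
  obtain ⟨D, hD, hcard⟩ : gammaConnDom G ∈ {n | ∃ D, IsConnDomSet G D ∧ D.ncard = n} :=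
    Nat.sInf_mem ⟨_, Set.univ, isConnDomSet_univ hG, rfl⟩
  exact hcard ▸ hD.diam_le_ncard_add_one

end ConnectedDomination

/-- If `G` is connected, non-complete and `μt(G) = n(G) - diam(G) + 1`,
then `γc(G) = diam(G) - 1`. -/
theorem gammaConnDom_eq_diam_sub_one {V : Type*} [Fintype V] (G : SimpleGraph V)
    (hG : G.Connected) (hnc : G ≠ ⊤)
    (h : muT G = Fintype.card V - G.diam + 1) :
    gammaConnDom G = G.diam - 1 := by
  obtain ⟨X, hX, hXcard⟩ := exists_isTMVSet_ncard_eq_muT hG.preconnected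
  have h2 := hG.two_le_diam hnc
  have hlt := hG.diam_lt_card
  have hcompl : Xᶜ.ncard = G.diam - 1 := by
    have := Set.ncard_add_ncard_compl X
    rw [Nat.card_eq_fintype_card] at this
    omega
  have hne : Xᶜ.Nonempty := Set.nonempty_of_ncard_ne_zero (by omega)
  have hD : IsConnDomSet G Xᶜ := ⟨hX.isDomSet_compl hne, hX.connected_induce_compl hne⟩
  have hlb := diam_le_gammaConnDom_add_one hG
  have hub : gammaConnDom G ≤ Xᶜ.ncard := Nat.sInf_le ⟨Xᶜ, hD, rfl⟩
  omega
end

section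
/- Let G and H be finite simple graphs that are not both complete. (i) If the domination number γ(G) = 1, then μt(G + H) = n(G) + n(H) − 1. (ii) If γ(G) ≠ 1 and γ(H) ≠ 1, then μt(G + H) = n(G) + n(H) − 2. -/
open SimpleGraph

/-!
In `G + H` two distinct non-adjacent vertices lie on the same side, and every vertex of the
other side is a common neighbour of them; so they are at distance two, and `X` is a total
mutual-visibility set exactly when each such pair has a common neighbour outside `X`.
If `g` dominates `G`, then `g` is such a common neighbour for every pair, so `{g}ᶜ` works;
without that, one vertex from each side still works. Conversely, unless `G + H` is complete
some pair is at distance two, so some vertex is missed; and when neither side has a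
dominating vertex, a missed vertex `z` has a vertex at distance two from it, and their common
neighbour outside `X` is a second missed vertex.
-/

namespace SimpleGraph

variable {V : Type*} {G : SimpleGraph V} {u v : V}

lemma dist_eq_two_iff :
    G.dist u v = 2 ↔ u ≠ v ∧ ¬ G.Adj u v ∧ (G.commonNeighbors u v).Nonempty := by
  rw [dist, ENat.toNat_eq_iff (by norm_num), Nat.cast_ofNat, edist_eq_two_iff]

lemma Walk.getVert_one_mem_commonNeighbors (p : G.Walk u v) (hp : p.length = 2) :
    p.getVert 1 ∈ G.commonNeighbors u v := by
  rw [mem_commonNeighbors]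
  refine ⟨by simpa using p.adj_getVert_succ (i := 0) (by omega), ?_⟩
  simpa [← hp, p.getVert_length] using (p.adj_getVert_succ (i := 1) (by omega)).symm

end SimpleGraph

open SimpleGraph

section TotalMutualVisibility

variable {V : Type*} {G : SimpleGraph V} {X : Set V}

lemma IsTMVSet.commonNeighbors_diff_nonempty (hX : IsTMVSet G X) {x y : V}
    (hxy : G.dist x y = 2) : (G.commonNeighbors x y \ X).Nonempty := by
  obtain ⟨p, hp, hpX⟩ := hX x y
  rw [hxy] at hp
  have hmid := p.getVert_one_mem_commonNeighbors hp
  obtain ⟨hxz, hyz⟩ := G.mem_commonNeighbors.mp hmid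
  exact ⟨_, hmid, hpX _ (p.getVert_mem_support 1) hxz.ne' hyz.ne'⟩

lemma isTMVSet_of_commonNeighbors_diff_nonempty
    (h : ∀ x y, x ≠ y → ¬ G.Adj x y → (G.commonNeighbors x y \ X).Nonempty) :
    IsTMVSet G X := by
  intro x y
  by_cases hxy : x = y
  · subst hxy
    exact ⟨.nil, by simp, by simp⟩
  by_cases hadj : G.Adj x y
  · exact ⟨hadj.toWalk, by simp [dist_eq_one_iff_adj.mpr hadj], by simp⟩
  obtain ⟨z, hz, hzX⟩ := h x y hxy hadj
  rw [mem_commonNeighbors] at hz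
  refine ⟨.cons hz.1 (.cons hz.2.symm .nil), ?_, ?_⟩
  · simp [dist_eq_two_iff.mpr ⟨hxy, hadj, z, hz.1, hz.2⟩]
  · rintro w hw hwx hwy
    simp only [Walk.support_cons, Walk.support_nil, List.mem_cons, List.not_mem_nil,
      or_false] at hw
    grind

lemma IsTMVSet.two_le_ncard_compl [Finite V] [Nonempty V] (hX : IsTMVSet G X)
    (hG : ∀ v, ∃ x, G.dist v x = 2) : 2 ≤ Xᶜ.ncard := by
  obtain ⟨x, hx⟩ := hG (Classical.arbitrary V)
  obtain ⟨z, -, hz⟩ := hX.commonNeighbors_diff_nonempty hx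
  obtain ⟨y, hy⟩ := hG z
  obtain ⟨w, hw, hwX⟩ := hX.commonNeighbors_diff_nonempty hy
  calc 2 = ({z, w} : Set V).ncard := (Set.ncard_pair (G.mem_commonNeighbors.mp hw).1.ne).symm
    _ ≤ Xᶜ.ncard := Set.ncard_le_ncard (Set.insert_subset hz (Set.singleton_subset_iff.mpr hwX))

lemma IsTMVSet.ncard_le_muT [Finite V] (hX : IsTMVSet G X) : X.ncard ≤ muT G :=
  le_csSup ⟨Nat.card V, by rintro _ ⟨Y, -, rfl⟩; exact Set.ncard_le_card Y⟩ ⟨X, hX, rfl⟩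

lemma muT_eq_card_sub_ncard [Finite V] {S : Set V} (hS : IsTMVSet G Sᶜ)
    (h : ∀ X, IsTMVSet G X → S.ncard ≤ Xᶜ.ncard) : muT G = Nat.card V - S.ncard := by
  refine le_antisymm (csSup_le' ?_) ?_
  · rintro _ ⟨X, hX, rfl⟩
    have := Set.ncard_add_ncard_compl X
    have := h X hX
    omega
  · have := Set.ncard_add_ncard_compl S
    have := hS.ncard_le_muT
    omega

end TotalMutualVisibility

section Domination

variable {V : Type*} {G : SimpleGraph V}

lemma IsDomSet.nonempty [Nonempty V] {D : Set V} (hD : IsDomSet G D) : D.Nonempty := by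
  by_cases h : Classical.arbitrary V ∈ D
  · exact ⟨_, h⟩
  · obtain ⟨u, hu, -⟩ := hD _ h
    exact ⟨u, hu⟩

lemma isDomSet_singleton_iff {g : V} : IsDomSet G {g} ↔ ∀ x ≠ g, G.Adj g x := by
  simp [IsDomSet]

lemma gammaDom_eq_one_iff [Finite V] [Nonempty V] :
    gammaDom G = 1 ↔ ∃ g, ∀ x ≠ g, G.Adj g x := by
  constructor
  · intro h
    obtain ⟨D, hD, hcard⟩ : 1 ∈ {n | ∃ D : Set V, IsDomSet G D ∧ D.ncard = n} :=
      h ▸ Nat.sInf_mem (Nat.nonempty_of_pos_sInf (by rw [← gammaDom, h]; norm_num))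
    obtain ⟨g, rfl⟩ := Set.ncard_eq_one.mp hcard
    exact ⟨g, isDomSet_singleton_iff.mp hD⟩
  · rintro ⟨g, hg⟩
    have hone : 1 ∈ {n | ∃ D : Set V, IsDomSet G D ∧ D.ncard = n} :=
      ⟨{g}, isDomSet_singleton_iff.mpr hg, Set.ncard_singleton g⟩
    refine le_antisymm (Nat.sInf_le hone) (le_csInf ⟨1, hone⟩ ?_)
    rintro _ ⟨D, hD, rfl⟩
    exact hD.nonempty.ncard_pos

end Domination

section Join

variable {V W : Type*} {G : SimpleGraph V} {H : SimpleGraph W}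

@[simp]
lemma joinGraph_adj_inl_inr {a : V} {b : W} : (joinGraph G H).Adj (.inl a) (.inr b) := by
  simp [joinGraph]

@[simp]
lemma joinGraph_adj_inr_inl {a : V} {b : W} : (joinGraph G H).Adj (.inr b) (.inl a) := by
  simp [joinGraph]

@[simp]
lemma joinGraph_adj_inl_inl {a b : V} : (joinGraph G H).Adj (.inl a) (.inl b) ↔ G.Adj a b := by
  simpa [joinGraph, G.adj_comm b a] using fun h : G.Adj a b => h.ne

@[simp]
lemma joinGraph_adj_inr_inr {a b : W} : (joinGraph G H).Adj (.inr a) (.inr b) ↔ H.Adj a b := by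
  simpa [joinGraph, H.adj_comm b a] using fun h : H.Adj a b => h.ne

lemma joinGraph_eq_top_iff : joinGraph G H = ⊤ ↔ G = ⊤ ∧ H = ⊤ := by
  refine ⟨fun h => ⟨?_, ?_⟩, fun ⟨hG, hH⟩ => ?_⟩
  · ext a b
    rw [← joinGraph_adj_inl_inl (H := H), h]
    simp
  · ext a b
    rw [← joinGraph_adj_inr_inr (G := G), h]
    simp
  · subst hG hH
    ext (a | a) (b | b) <;> simp

lemma joinGraph_dist_eq_two [Nonempty V] [Nonempty W] {x y : V ⊕ W} (hxy : x ≠ y)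
    (hadj : ¬ (joinGraph G H).Adj x y) : (joinGraph G H).dist x y = 2 := by
  refine dist_eq_two_iff.mpr ⟨hxy, hadj, ?_⟩
  rcases x with a | a <;> rcases y with b | b
  · exact ⟨.inr (Classical.arbitrary W), by simp [mem_commonNeighbors]⟩
  · simp at hadj
  · simp at hadj
  · exact ⟨.inl (Classical.arbitrary V), by simp [mem_commonNeighbors]⟩

lemma joinGraph_exists_dist_eq_two [Nonempty V] [Nonempty W] (hG : ∀ a, ∃ b ≠ a, ¬ G.Adj a b)
    (hH : ∀ a, ∃ b ≠ a, ¬ H.Adj a b) (x : V ⊕ W) : ∃ y, (joinGraph G H).dist x y = 2 := by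
  rcases x with a | a
  · obtain ⟨b, hba, hab⟩ := hG a
    exact ⟨.inl b, joinGraph_dist_eq_two (by simpa using hba.symm) (by simpa using hab)⟩
  · obtain ⟨b, hba, hab⟩ := hH a
    exact ⟨.inr b, joinGraph_dist_eq_two (by simpa using hba.symm) (by simpa using hab)⟩

lemma isTMVSet_joinGraph_compl_singleton {g : V} (hg : ∀ x ≠ g, G.Adj g x) :
    IsTMVSet (joinGraph G H) {.inl g}ᶜ := by
  refine isTMVSet_of_commonNeighbors_diff_nonempty ?_
  rintro (a | a) (b | b) hab hadj
  · have ha : a ≠ g := by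
      rintro rfl
      exact hadj (joinGraph_adj_inl_inl.mpr (hg b (by simpa using hab.symm)))
    have hb : b ≠ g := by
      rintro rfl
      exact hadj (joinGraph_adj_inl_inl.mpr (hg a (by simpa using hab)).symm)
    exact ⟨.inl g, by simp [mem_commonNeighbors, (hg a ha).symm, (hg b hb).symm]⟩
  · simp at hadj
  · simp at hadj
  · exact ⟨.inl g, by simp [mem_commonNeighbors]⟩

lemma isTMVSet_joinGraph_compl_pair (a : V) (b : W) :
    IsTMVSet (joinGraph G H) {.inl a, .inr b}ᶜ := by
  refine isTMVSet_of_commonNeighbors_diff_nonempty ?_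
  rintro (x | x) (y | y) hxy hadj
  · exact ⟨.inr b, by simp [mem_commonNeighbors]⟩
  · simp at hadj
  · simp at hadj
  · exact ⟨.inl a, by simp [mem_commonNeighbors]⟩

end Join

/-- Total mutual-visibility number of a join graph. -/
theorem muT_joinGraph {V W : Type*} [Fintype V] [Fintype W] [Nonempty V] [Nonempty W]
    (G : SimpleGraph V) (H : SimpleGraph W) (h : ¬(G = ⊤ ∧ H = ⊤)) :
    (gammaDom G = 1 → muT (joinGraph G H) = Fintype.card V + Fintype.card W - 1) ∧
    (gammaDom G ≠ 1 → gammaDom H ≠ 1 →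
      muT (joinGraph G H) = Fintype.card V + Fintype.card W - 2) := by
  have hcard : Fintype.card V + Fintype.card W = Nat.card (V ⊕ W) := by simp
  refine ⟨fun hG => ?_, fun hG hH => ?_⟩
  · obtain ⟨g, hg⟩ := gammaDom_eq_one_iff.mp hG
    obtain ⟨x, y, hxy, hadj⟩ := ne_top_iff_exists_not_adj.mp (joinGraph_eq_top_iff.not.mpr h)
    rw [hcard, muT_eq_card_sub_ncard (isTMVSet_joinGraph_compl_singleton hg), Set.ncard_singleton]
    intro X hX
    obtain ⟨z, -, hz⟩ := hX.commonNeighbors_diff_nonempty (joinGraph_dist_eq_two hxy hadj)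
    rw [Set.ncard_singleton]
    exact (Set.nonempty_of_mem hz).ncard_pos
  · rw [Ne, gammaDom_eq_one_iff] at hG hH
    push Not at hG hH
    rw [hcard, muT_eq_card_sub_ncard
      (isTMVSet_joinGraph_compl_pair (Classical.arbitrary V) (Classical.arbitrary W)),
      Set.ncard_pair Sum.inl_ne_inr]
    intro X hX
    rw [Set.ncard_pair Sum.inl_ne_inr]
    exact hX.two_le_ncard_compl (joinGraph_exists_dist_eq_two hG hH)
end

section
/- Let G be a finite connected simple graph whose set S(G) of simplicial vertices is partitioned into true twin equivalence classes C_1,…,C_k (vertices g,g' ∈ S(G) are in the same class if and only if N_G[g] = N_G[g']). If μt(G) = |S(G)|, then for any integer n ≥ 2, μt(G □ K_n) = Σ_{i=1}^{k} max{|C_i|, n}, where K_n is the complete graph on n vertices. -/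
/-!
Simplicial vertices are never internal to shortest paths, so adding `S(G)` to a total
mutual-visibility set of `G` keeps it one; as `μt(G) = |S(G)|`, every such set lies in `S(G)`.
Shortest paths between two vertices of one `G`-layer of `G □ Kₙ` stay in that layer, so every
total mutual-visibility set `X` of `G □ Kₙ` lies over `S(G)`. For a set over `S(G)`, being a
total mutual-visibility set of `G □ Kₙ` means exactly that it contains no two opposite corners
`(a, q)`, `(b, p)` of a square with `a ~ b`. Adjacent simplicial vertices are true twins, so this
only concerns pairs inside one class `Cᵢ`, where it says that `X ∩ (Cᵢ × Kₙ)` lies in one layer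
or over one vertex: it has at most `max (|Cᵢ|, n)` elements, and both shapes are realised.
-/

open SimpleGraph

namespace SimpleGraph

variable {V W : Type*} {G : SimpleGraph V}

def IsVisible (G : SimpleGraph V) (X : Set V) (x y : V) : Prop :=
  ∃ p : G.Walk x y, p.length = G.dist x y ∧ ∀ w ∈ p.support, w ≠ x → w ≠ y → w ∉ X

lemma IsVisible.symm {X : Set V} {x y : V} (h : G.IsVisible X x y) : G.IsVisible X y x := by
  obtain ⟨p, hp, hX⟩ := h
  refine ⟨p.reverse, by rw [Walk.length_reverse, hp, dist_comm], fun w hw hwy hwx => ?_⟩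
  exact hX w (by simpa using hw) hwx hwy

lemma isVisible_of_adj {X : Set V} {x y : V} (h : G.Adj x y) : G.IsVisible X x y := by
  refine ⟨Walk.cons h Walk.nil, (dist_eq_one_iff_adj.mpr h).symm, fun w hw hwx hwy => ?_⟩
  simp_all

lemma closedNbhd_subset_of_adj {a b : V} (hab : G.Adj a b) (ha : a ∈ simpSet G) :
    closedNbhd G a ⊆ closedNbhd G b := by
  rintro c (rfl | hc)
  · exact Or.inr hab.symm
  · by_cases hcb : c = b
    · exact Or.inl hcb
    · exact Or.inr (ha hab hc (Ne.symm hcb))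

lemma closedNbhd_eq_of_adj {a b : V} (hab : G.Adj a b) (ha : a ∈ simpSet G)
    (hb : b ∈ simpSet G) : closedNbhd G a = closedNbhd G b :=
  (closedNbhd_subset_of_adj hab ha).antisymm (closedNbhd_subset_of_adj hab.symm hb)

lemma adj_of_closedNbhd_eq {a b : V} (hab : a ≠ b) (h : closedNbhd G a = closedNbhd G b) :
    G.Adj a b := by
  have hb : b ∈ closedNbhd G a := h ▸ Set.mem_insert b _
  exact hb.resolve_left hab.symm

lemma Walk.notMem_simpSet_of_length_eq_dist {x y : V} (p : G.Walk x y)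
    (hp : p.length = G.dist x y) {w : V} (hw : w ∈ p.support) (hwx : w ≠ x) (hwy : w ≠ y) :
    w ∉ simpSet G := by
  induction p with
  | nil => exact absurd (List.mem_singleton.mp hw) hwx
  | @cons x z y h p ih =>
    have hp' := length_eq_dist_of_subwalk hp (Walk.isSubwalk_cons p h)
    obtain hw | hw := List.mem_cons.mp hw
    · exact absurd hw hwx
    rcases eq_or_ne w z with rfl | hwz
    · intro hS
      cases p with
      | nil => exact hwy rfl
      | @cons _ v _ h' q =>
        have hpath := (Walk.cons_isPath_iff h _).mp (Walk.isPath_of_length_eq_dist _ hp)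
        have hxv : x ≠ v := fun hxv => hpath.2 (by simp [hxv])
        -- a simplicial vertex can be skipped, shortening the walk
        have := dist_le (Walk.cons (hS h.symm h' hxv) q)
        simp only [Walk.length_cons] at hp this
        omega
    · exact ih hp' hw hwz hwy

lemma IsTMVSet.union_simpSet {X : Set V} (hX : IsTMVSet G X) : IsTMVSet G (X ∪ simpSet G) := by
  intro x y
  obtain ⟨p, hp, hpX⟩ := hX x y
  exact ⟨p, hp, fun w hw hwx hwy hwXS =>
    hwXS.elim (hpX w hw hwx hwy) (p.notMem_simpSet_of_length_eq_dist hp hw hwx hwy)⟩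

lemma IsTMVSet.ncard_le_muT [Finite V] {X : Set V} (hX : IsTMVSet G X) : X.ncard ≤ muT G :=
  le_csSup ⟨Nat.card V, by rintro _ ⟨Y, -, rfl⟩; exact Set.ncard_le_card Y⟩ ⟨X, hX, rfl⟩

lemma muT_le_of_forall {b : ℕ} (h : ∀ X : Set V, IsTMVSet G X → X.ncard ≤ b) : muT G ≤ b :=
  csSup_le' (by rintro _ ⟨X, hX, rfl⟩; exact h X hX)

lemma IsTMVSet.subset_simpSet [Finite V] (hmu : muT G = (simpSet G).ncard) {X : Set V}
    (hX : IsTMVSet G X) : X ⊆ simpSet G := by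
  have hle : (X ∪ simpSet G).ncard ≤ (simpSet G).ncard := hmu ▸ hX.union_simpSet.ncard_le_muT
  rw [Set.eq_of_subset_of_ncard_le Set.subset_union_right hle]
  exact Set.subset_union_left

section BoxProd

variable {H : SimpleGraph W}

lemma dist_boxProd {x y : V × W} (hG : G.Reachable x.1 y.1) (hH : H.Reachable x.2 y.2) :
    (G □ H).dist x y = G.dist x.1 y.1 + H.dist x.2 y.2 := by
  simp only [dist, edist_boxProd]
  exact ENat.toNat_add (edist_ne_top_iff_reachable.mpr hG) (edist_ne_top_iff_reachable.mpr hH)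

lemma dist_boxProd_top_of_ne (hG : G.Preconnected) (a b : V) {p q : W} (hpq : p ≠ q) :
    (G □ (⊤ : SimpleGraph W)).dist (a, p) (b, q) = G.dist a b + 1 := by
  rw [dist_boxProd (hG a b) ((top_adj p q).mpr hpq).reachable, dist_top_of_ne hpq]

lemma dist_boxProd_self (hG : G.Preconnected) (a b : V) (t : W) :
    (G □ H).dist (a, t) (b, t) = G.dist a b := by
  rw [dist_boxProd (hG a b) (Reachable.refl t), dist_self, add_zero]

lemma Walk.length_boxProdLeft {a b : V} (t : W) (P : G.Walk a b) :
    (P.boxProdLeft H t).length = P.length :=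
  Walk.length_map _ P

lemma Walk.support_boxProdLeft {a b : V} (t : W) (P : G.Walk a b) :
    (P.boxProdLeft H t).support = P.support.map (·, t) :=
  Walk.support_map _ P

lemma Walk.support_ofBoxProdLeft_subset [DecidableEq W] [DecidableRel G.Adj] {x y : V × W}
    (w : (G □ H).Walk x y) : w.ofBoxProdLeft.support ⊆ w.support.map Prod.fst := by
  induction w with
  | nil => simp [Walk.ofBoxProdLeft]
  | @cons x z y h w ih =>
    obtain ⟨x1, x2⟩ := x
    obtain ⟨z1, z2⟩ := z
    unfold Walk.ofBoxProdLeft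
    rcases h with ⟨h, rfl : x2 = z2⟩ | ⟨-, rfl : x1 = z1⟩
    · simp only [Or.by_cases, h, and_self, ↓reduceDIte, Walk.support_cons]
      exact List.cons_subset_cons _ ih
    · simp only [Or.by_cases, G.loopless.irrefl, false_and, ↓reduceDIte]
      exact fun v hv => List.mem_cons_of_mem _ (ih hv)

lemma Walk.support_map_snd_subset_ofBoxProdRight [DecidableEq V] [DecidableRel H.Adj]
    {x y : V × W} (w : (G □ H).Walk x y) :
    w.support.map Prod.snd ⊆ w.ofBoxProdRight.support := by
  induction w with
  | nil => simp [Walk.ofBoxProdRight]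
  | @cons x z y h w ih =>
    obtain ⟨x1, x2⟩ := x
    obtain ⟨z1, z2⟩ := z
    unfold Walk.ofBoxProdRight
    rcases h with ⟨-, rfl : x2 = z2⟩ | ⟨h, rfl : x1 = z1⟩
    · simp only [Or.by_cases, H.loopless.irrefl, false_and, ↓reduceDIte]
      exact List.cons_subset.mpr ⟨w.ofBoxProdRight.start_mem_support, ih⟩
    · simp only [Or.by_cases, h, and_self, ↓reduceDIte, Walk.support_cons]
      exact List.cons_subset_cons _ ih

/-- A shortest walk between two vertices of one `G`-layer of `G □ H` stays in that layer. -/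
lemma IsTMVSet.layer (hG : G.Preconnected) {X : Set (V × W)} (hX : IsTMVSet (G □ H) X)
    (t : W) : IsTMVSet G {g | (g, t) ∈ X} := by
  classical
  intro a b
  obtain ⟨w, hw, hwX⟩ := hX (a, t) (b, t)
  rw [dist_boxProd_self hG] at hw
  have hP : G.dist a b ≤ w.ofBoxProdLeft.length := dist_le _
  have hsplit := w.length_boxProd
  have hR : w.ofBoxProdRight.support = [t] :=
    Walk.nil_iff_support_eq.mp (Walk.length_eq_zero_iff.mp (by omega))
  refine ⟨w.ofBoxProdLeft, by omega, fun v hv hva hvb hvX => ?_⟩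
  obtain ⟨z, hz, rfl⟩ := List.mem_map.mp (w.support_ofBoxProdLeft_subset hv)
  have hzt : z.2 = t := by
    simpa [hR] using w.support_map_snd_subset_ofBoxProdRight (List.mem_map_of_mem hz)
  exact hwX z hz (by grind) (by grind) (by rwa [← hzt] at hvX)

/-- `(a, q)` and `(b, p)` are the middle vertices of the only two shortest `(a, p)`–`(b, q)`
paths. -/
lemma IsTMVSet.notMem_of_adj_of_adj {X : Set (V × W)} (hX : IsTMVSet (G □ H) X) {a b : V}
    {p q : W} (hab : G.Adj a b) (hpq : H.Adj p q) (ha : (a, q) ∈ X) : (b, p) ∉ X := by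
  obtain ⟨w, hw, hwX⟩ := hX (a, p) (b, q)
  rw [dist_boxProd hab.reachable hpq.reachable, dist_eq_one_iff_adj.mpr hab,
    dist_eq_one_iff_adj.mpr hpq, one_add_one_eq_two] at hw
  have h1 : (G □ H).Adj (a, p) (w.getVert 1) := by
    simpa using w.adj_getVert_succ (i := 0) (by omega)
  have h2 : (G □ H).Adj (w.getVert 1) (b, q) := by
    simpa [w.getVert_of_length_le (i := 2) hw.le] using w.adj_getVert_succ (i := 1) (by omega)
  have hm : w.getVert 1 = (a, q) ∨ w.getVert 1 = (b, p) := by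
    generalize w.getVert 1 = m at h1 h2
    obtain ⟨m1, m2⟩ := m
    rcases boxProd_adj.mp h1 with ⟨u1, u2⟩ | ⟨u1, u2⟩ <;>
      rcases boxProd_adj.mp h2 with ⟨v1, v2⟩ | ⟨v1, v2⟩
    · exact absurd (u2.trans v2) hpq.ne
    · simp_all
    · simp_all
    · exact absurd (u2.trans v2) hab.ne
  have hmX := hwX _ (w.getVert_mem_support 1) h1.ne' h2.ne
  rcases hm with hm | hm <;> rw [hm] at hmX
  · exact absurd ha hmX
  · exact hmX

end BoxProd

/-- `X` contains no two opposite corners `(a, q)`, `(b, p)` of a square of `G □ K_W`. -/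
def NoSquareDiagonal (G : SimpleGraph V) (X : Set (V × W)) : Prop :=
  ∀ ⦃a b : V⦄ ⦃p q : W⦄, G.Adj a b → p ≠ q → (a, q) ∈ X → (b, p) ∉ X

section Visibility

variable {X : Set (V × W)} (hG : G.Preconnected) (hS : ∀ x ∈ X, x.1 ∈ simpSet G)
include hG hS

lemma isVisible_boxProd_top_of_snd_eq (a b : V) (t : W) :
    (G □ (⊤ : SimpleGraph W)).IsVisible X (a, t) (b, t) := by
  obtain ⟨P, hP⟩ := (hG a b).exists_walk_length_eq_dist
  refine ⟨P.boxProdLeft _ t, ?_, fun z hz hza hzb hzX => ?_⟩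
  · rw [Walk.length_boxProdLeft, hP, dist_boxProd_self hG]
  rw [Walk.support_boxProdLeft] at hz
  obtain ⟨v, hv, rfl⟩ := List.mem_map.mp hz
  exact P.notMem_simpSet_of_length_eq_dist hP hv (by grind) (by grind) (hS _ hzX)

/-- Cross to the layer of the target first, then follow a shortest `G`-path there. -/
lemma isVisible_boxProd_top_of_notMem {a b : V} {p q : W} (hpq : p ≠ q) (haq : (a, q) ∉ X) :
    (G □ (⊤ : SimpleGraph W)).IsVisible X (a, p) (b, q) := by
  obtain ⟨P, hP⟩ := (hG a b).exists_walk_length_eq_dist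
  refine ⟨Walk.cons (boxProd_adj_right.mpr hpq) (P.boxProdLeft _ q), ?_,
    fun z hz hzap hzbq hzX => ?_⟩
  · rw [Walk.length_cons, Walk.length_boxProdLeft, hP, dist_boxProd_top_of_ne hG _ _ hpq]
  rw [Walk.support_cons, Walk.support_boxProdLeft] at hz
  obtain rfl | hz := List.mem_cons.mp hz
  · exact hzap rfl
  obtain ⟨v, hv, rfl⟩ := List.mem_map.mp hz
  rcases eq_or_ne v a with rfl | hva
  · exact haq hzX
  exact P.notMem_simpSet_of_length_eq_dist hP hv hva (by grind) (hS _ hzX)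

/-- Take one step along a shortest `G`-path, whose second vertex is not simplicial, cross to the
layer of the target, and follow the rest of the path there. -/
lemma isVisible_boxProd_top_of_not_adj {a b : V} {p q : W} (hpq : p ≠ q) (hab : a ≠ b)
    (hnadj : ¬ G.Adj a b) : (G □ (⊤ : SimpleGraph W)).IsVisible X (a, p) (b, q) := by
  obtain ⟨P, hP⟩ := (hG a b).exists_walk_length_eq_dist
  cases P with
  | nil => exact absurd rfl hab
  | @cons _ c _ hac P' =>
  have hcb : c ≠ b := by rintro rfl; exact hnadj hac
  have hcS : c ∉ simpSet G :=
    (Walk.cons hac P').notMem_simpSet_of_length_eq_dist hP (by simp) hac.ne' hcb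
  have hP' := length_eq_dist_of_subwalk hP (Walk.isSubwalk_cons P' hac)
  refine ⟨Walk.cons (boxProd_adj_left.mpr hac)
    (Walk.cons (boxProd_adj_right.mpr hpq) (P'.boxProdLeft _ q)), ?_,
    fun z hz hzap hzbq hzX => ?_⟩
  · rw [Walk.length_cons, Walk.length_cons, Walk.length_boxProdLeft,
      dist_boxProd_top_of_ne hG _ _ hpq, ← hP, Walk.length_cons]
  simp only [Walk.support_cons, Walk.support_boxProdLeft, List.mem_cons, List.mem_map] at hz
  obtain rfl | rfl | ⟨v, hv, rfl⟩ := hz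
  · exact hzap rfl
  · exact hcS (hS _ hzX)
  rcases eq_or_ne v c with rfl | hvc
  · exact hcS (hS _ hzX)
  exact P'.notMem_simpSet_of_length_eq_dist hP' hv hvc (by grind) (hS _ hzX)

lemma isTMVSet_boxProd_top (hX : NoSquareDiagonal G X) :
    IsTMVSet (G □ (⊤ : SimpleGraph W)) X := by
  rintro ⟨a, p⟩ ⟨b, q⟩
  rcases eq_or_ne p q with rfl | hpq
  · exact isVisible_boxProd_top_of_snd_eq hG hS a b p
  by_cases haq : (a, q) ∈ X
  · by_cases hbp : (b, p) ∈ X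
    · rcases eq_or_ne a b with rfl | hab
      · exact isVisible_of_adj (boxProd_adj_right.mpr hpq)
      · exact isVisible_boxProd_top_of_not_adj hG hS hpq hab fun hadj => hX hadj hpq haq hbp
    · exact (isVisible_boxProd_top_of_notMem hG hS hpq.symm hbp).symm
  · exact isVisible_boxProd_top_of_notMem hG hS hpq haq

end Visibility

theorem isTMVSet_boxProd_top_iff [Finite V] (hG : G.Connected)
    (hmu : muT G = (simpSet G).ncard) {X : Set (V × W)} :
    IsTMVSet (G □ (⊤ : SimpleGraph W)) X ↔ (∀ x ∈ X, x.1 ∈ simpSet G) ∧ NoSquareDiagonal G X := by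
  refine ⟨fun hX => ⟨fun x hx => ?_, fun a b p q hab hpq => ?_⟩,
    fun ⟨hS, hND⟩ => isTMVSet_boxProd_top hG.preconnected hS hND⟩
  · exact (hX.layer hG.preconnected x.2).subset_simpSet hmu (show (x.1, x.2) ∈ X from hx)
  · exact hX.notMem_of_adj_of_adj hab ((top_adj p q).mpr hpq)

end SimpleGraph

namespace Set

variable {α β : Type*}

/-- Either all of `A` lies over one point, or `Prod.fst` is injective on `A`. -/
lemma ncard_le_max_of_snd_eq_of_fst_ne [Finite α] [Finite β] {A : Set (α × β)} {C : Set α}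
    (hAC : ∀ x ∈ A, x.1 ∈ C) (hA : ∀ x ∈ A, ∀ y ∈ A, x.1 ≠ y.1 → x.2 = y.2) :
    A.ncard ≤ max C.ncard (Nat.card β) := by
  by_cases hinj : InjOn Prod.fst A
  · calc A.ncard = (Prod.fst '' A).ncard := hinj.ncard_image.symm
      _ ≤ C.ncard := ncard_le_ncard (image_subset_iff.mpr hAC)
      _ ≤ _ := le_max_left _ _
  obtain ⟨x, hx, y, hy, hxy1, hxy⟩ : ∃ x ∈ A, ∃ y ∈ A, x.1 = y.1 ∧ x ≠ y := by
    simpa [InjOn] using hinj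
  have hsub : A ⊆ {x.1} ×ˢ univ := fun z hz => ⟨by_contra fun hzx => hxy (Prod.ext hxy1
    ((hA z hz x hx hzx).symm.trans (hA z hz y hy (hxy1 ▸ hzx)))), trivial⟩
  calc A.ncard ≤ ({x.1} ×ˢ (univ : Set β)).ncard := ncard_le_ncard hsub
    _ = Nat.card β := by simp
    _ ≤ _ := le_max_right _ _

lemma exists_ncard_eq_max_of_snd_eq_of_fst_ne [Nonempty β] {C : Set α} (hC : C.Nonempty) :
    ∃ A : Set (α × β), (∀ x ∈ A, x.1 ∈ C) ∧ (∀ x ∈ A, ∀ y ∈ A, x.1 ≠ y.1 → x.2 = y.2) ∧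
      A.ncard = max C.ncard (Nat.card β) := by
  obtain ⟨t⟩ := ‹Nonempty β›
  obtain ⟨g, hg⟩ := hC
  rcases le_total (Nat.card β) C.ncard with h | h
  · exact ⟨C ×ˢ {t}, fun x hx => hx.1, fun x hx y hy _ => hx.2.trans hy.2.symm, by simp [h]⟩
  · exact ⟨{g} ×ˢ univ, fun x hx => hx.1 ▸ hg,
      fun x hx y hy hxy => absurd (hx.1.trans hy.1.symm) hxy, by simp [h]⟩

end Set

namespace SimpleGraph

variable {V W ι : Type*} [Fintype ι] {G : SimpleGraph V} {C : ι → Set V}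

lemma NoSquareDiagonal.ncard_le_sum [Finite V] [Finite W] (hcover : simpSet G ⊆ ⋃ i, C i)
    (hclique : ∀ i, G.IsClique (C i)) {X : Set (V × W)} (hS : ∀ x ∈ X, x.1 ∈ simpSet G)
    (hX : NoSquareDiagonal G X) : X.ncard ≤ ∑ i, max (C i).ncard (Nat.card W) := by
  have hXcover : X ⊆ ⋃ i, X ∩ {x | x.1 ∈ C i} := fun x hx => by
    simpa [hx] using hcover (hS x hx)
  calc X.ncard ≤ (⋃ i, X ∩ {x | x.1 ∈ C i}).ncard := Set.ncard_le_ncard hXcover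
    _ ≤ ∑ i, (X ∩ {x | x.1 ∈ C i}).ncard := Set.ncard_iUnion_le_of_fintype _
    _ ≤ _ := Finset.sum_le_sum fun i _ => Set.ncard_le_max_of_snd_eq_of_fst_ne
      (fun x hx => hx.2) fun x hx y hy hxy => by_contra fun h =>
        hX (hclique i hx.2 hy.2 hxy) (Ne.symm h) hx.1 hy.1

lemma exists_noSquareDiagonal_ncard_eq_sum [Finite V] [Finite W] [Nonempty W]
    (hne : ∀ i, (C i).Nonempty) (hdisj : Pairwise fun i j => Disjoint (C i) (C j))
    (hsub : ∀ i, C i ⊆ simpSet G) (hclass : ∀ i j, ∀ a ∈ C i, ∀ b ∈ C j, G.Adj a b → i = j) :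
    ∃ X : Set (V × W), (∀ x ∈ X, x.1 ∈ simpSet G) ∧ NoSquareDiagonal G X ∧
      X.ncard = ∑ i, max (C i).ncard (Nat.card W) := by
  choose A hAC hA hcard using fun i => Set.exists_ncard_eq_max_of_snd_eq_of_fst_ne (β := W) (hne i)
  refine ⟨⋃ i, A i, ?_, ?_, ?_⟩
  · simp only [Set.mem_iUnion]
    rintro x ⟨i, hx⟩
    exact hsub i (hAC i x hx)
  · intro a b p q hab hpq haq hbp
    simp only [Set.mem_iUnion] at haq hbp
    obtain ⟨i, hi⟩ := haq
    obtain ⟨j, hj⟩ := hbp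
    obtain rfl := hclass i j a (hAC i _ hi) b (hAC j _ hj) hab
    exact hpq (hA i _ hj _ hi hab.ne.symm)
  · have hAdisj : Pairwise fun i j => Disjoint (A i) (A j) := fun i j hij => Set.disjoint_left.mpr
      fun x hi hj => Set.disjoint_left.mp (hdisj hij) (hAC i x hi) (hAC j x hj)
    rw [Set.ncard_iUnion_of_finite (fun i => Set.toFinite _) hAdisj, finsum_eq_sum_of_fintype]
    exact Finset.sum_congr rfl fun i _ => hcard i

end SimpleGraph

/-- If `μt(G) = |S(G)|` and `C₁, …, C_k` are the true twin equivalence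
classes of `S(G)`, then `μt(G □ Kₙ) = Σᵢ max{|Cᵢ|, n}` for every `n ≥ 2`. -/
theorem muT_boxProd_completeGraph {V : Type*} [Fintype V] (G : SimpleGraph V)
    (hG : G.Connected) (k : ℕ) (C : Fin k → Set V)
    (hne : ∀ i, (C i).Nonempty)
    (hdisj : ∀ i j, i ≠ j → Disjoint (C i) (C j))
    (hunion : (⋃ i, C i) = simpSet G)
    (htwin : ∀ g ∈ simpSet G, ∀ g' ∈ simpSet G,
      ((∃ i, g ∈ C i ∧ g' ∈ C i) ↔ closedNbhd G g = closedNbhd G g'))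
    (hmu : muT G = (simpSet G).ncard)
    (n : ℕ) (hn : 2 ≤ n) :
    muT (G □ (⊤ : SimpleGraph (Fin n))) = ∑ i : Fin k, max (C i).ncard n := by
  have : Nonempty (Fin n) := ⟨⟨0, by omega⟩⟩
  have hsub : ∀ i, C i ⊆ simpSet G := fun i => hunion ▸ Set.subset_iUnion C i
  have hclique : ∀ i, G.IsClique (C i) := fun i a ha b hb hab =>
    adj_of_closedNbhd_eq hab ((htwin a (hsub i ha) b (hsub i hb)).mp ⟨i, ha, hb⟩)
  have hunique : ∀ i j, ∀ a, a ∈ C i → a ∈ C j → i = j := fun i j a hi hj =>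
    by_contra fun hij => Set.disjoint_left.mp (hdisj i j hij) hi hj
  have hclass : ∀ i j, ∀ a ∈ C i, ∀ b ∈ C j, G.Adj a b → i = j := fun i j a ha b hb hab => by
    obtain ⟨l, hal, hbl⟩ := (htwin a (hsub i ha) b (hsub j hb)).mpr
      (closedNbhd_eq_of_adj hab (hsub i ha) (hsub j hb))
    exact (hunique i l a ha hal).trans (hunique j l b hb hbl).symm
  apply le_antisymm
  · refine muT_le_of_forall fun X hX => ?_
    obtain ⟨hS, hND⟩ := (isTMVSet_boxProd_top_iff hG hmu).mp hX
    simpa using hND.ncard_le_sum hunion.ge hclique hS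
  · obtain ⟨X, hS, hND, hX⟩ := exists_noSquareDiagonal_ncard_eq_sum (W := Fin n) hne
      (fun i j => hdisj i j) hsub hclass
    rw [Nat.card_fin] at hX
    exact hX ▸ ((isTMVSet_boxProd_top_iff hG hmu).mpr ⟨hS, hND⟩).ncard_le_muT
end
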